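/- arXiv:1505.03005 — 4 statements merged into one kernel-verified Lean document; each statement's English description precedes it below -/
import Mathlib

section
/- Let T be a finite tree with vertex set V and let M be a symmetric integer matrix adapted to T. Let e = {a, b} be an edge of T, let M₀ be the matrix that agrees with M except that its (a,b) and (b,a) entries are 0, and let M″ be the principal submatrix of M obtained by deleting the rows and columns indexed by a and b. Then det(−M) = det(−M₀) − det(−M″). -/
/-!
`-M` and `-M₀` differ only in the entries `(a, b)` and `(b, a)`, so multilinearity of the
determinant in the rows `a` and `b` splits `det (-M)` into four terms. Besides `det (-M₀)`, the
two mixed terms vanish: once the edge is deleted, `a` and `b` lie in different components, so the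
matrix is block triangular with respect to the component of `a` (resp. `b`) and has a zero row in
that block. The last term has unit rows at `a` and `b`; after swapping them (a sign `-1`) only
the principal submatrix on `V \ {a, b}` is left.
-/

namespace Matrix

variable {n R : Type*} [Fintype n] [DecidableEq n] [CommRing R]

theorem det_eq_det_toSquareBlockProp_of_row_eq_single (A : Matrix n n R) (p : n → Prop)
    [DecidablePred p] (h : ∀ i, ¬p i → A i = Pi.single i 1) :
    A.det = (A.toSquareBlockProp p).det := by
  have hzero : ∀ i, ¬p i → ∀ j, p j → A i j = 0 := fun i hi j hj => by
    rw [h i hi, Pi.single_apply, if_neg (by rintro rfl; exact hi hj)]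
  have hone : A.toSquareBlockProp (fun i => ¬p i) = 1 := by
    ext ⟨i, hi⟩ ⟨j, hj⟩
    simp [toSquareBlockProp_def, h i hi, Pi.single_apply, one_apply, Subtype.ext_iff, eq_comm]
  rw [twoBlockTriangular_det A p hzero, hone, det_one, mul_one]

theorem det_updateRow_single_updateRow_single {i j : n} (hij : i ≠ j) (A : Matrix n n R)
    (c d : R) :
    ((A.updateRow i (Pi.single j c)).updateRow j (Pi.single i d)).det =
      -(c * d) * (A.toSquareBlockProp fun k => k ≠ i ∧ k ≠ j).det := by
  set B := (A.updateRow i (Pi.single j 1)).updateRow j (Pi.single i 1)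
  have hscale : ((A.updateRow i (Pi.single j c)).updateRow j (Pi.single i d)).det =
      c * d * B.det := by
    have hsingle : ∀ (k : n) (e : R), Pi.single k e = e • Pi.single k 1 := fun k e => by
      rw [← Pi.single_smul', smul_eq_mul, mul_one]
    rw [hsingle j c, hsingle i d, det_updateRow_smul, updateRow_comm _ hij, det_updateRow_smul,
      updateRow_comm _ hij.symm]
    ring
  have hswap : (B.submatrix (Equiv.swap i j) id).det = -B.det := by
    simp [det_permute, Equiv.Perm.sign_swap hij]
  have hrows : ∀ k, ¬(k ≠ i ∧ k ≠ j) → B.submatrix (Equiv.swap i j) id k = Pi.single k 1 := by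
    intro k hk
    obtain rfl | rfl : k = i ∨ k = j := by tauto
    all_goals ext l; simp [B, updateRow_apply, hij]
  have hblock : (B.submatrix (Equiv.swap i j) id).toSquareBlockProp (fun k => k ≠ i ∧ k ≠ j) =
      A.toSquareBlockProp fun k => k ≠ i ∧ k ≠ j := by
    ext ⟨k, hki, hkj⟩ l
    simp [B, toSquareBlockProp_def, Equiv.swap_apply_of_ne_of_ne hki hkj, updateRow_apply, hki,
      hkj]
  rw [hscale, ← neg_neg B.det, ← hswap, det_eq_det_toSquareBlockProp_of_row_eq_single _ _ hrows,
    hblock]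
  ring

theorem det_updateRow_add_updateRow_add {i j : n} (hij : i ≠ j) (A : Matrix n n R)
    (r s : n → R) :
    ((A.updateRow i (A i + r)).updateRow j (A j + s)).det =
      A.det + (A.updateRow i r).det + (A.updateRow j s).det +
        ((A.updateRow i r).updateRow j s).det := by
  have hrow : (A.updateRow j s) i = A i := updateRow_ne hij
  rw [det_updateRow_add, updateRow_comm _ hij, updateRow_eq_self, det_updateRow_add,
    updateRow_eq_self, updateRow_comm A hij (A i + r) s, ← hrow, det_updateRow_add,
    updateRow_eq_self, updateRow_comm A hij.symm s r]
  ring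

theorem det_updateRow_eq_zero_of_not_reachable (G : SimpleGraph n) (A : Matrix n n R)
    (hA : ∀ u v, u ≠ v → ¬G.Adj u v → A u v = 0) (x : n) (r : n → R)
    (hr : ∀ v, G.Reachable x v → r v = 0) : (A.updateRow x r).det = 0 := by
  classical
  have hcut : ∀ u, ¬G.Reachable x u → ∀ v, G.Reachable x v → A.updateRow x r u v = 0 := by
    intro u hu v hv
    rw [updateRow_ne (by rintro rfl; exact hu (.refl _))]
    exact hA u v (by rintro rfl; exact hu hv) fun huv => hu (hv.trans huv.symm.reachable)
  rw [twoBlockTriangular_det _ _ hcut]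
  refine mul_eq_zero_of_left (det_eq_zero_of_row_eq_zero ⟨x, .refl x⟩ fun v => ?_) _
  simp [toSquareBlockProp_def, hr v v.2]

end Matrix

open Matrix

theorem det_neg_adapted_edge_deletion_general {V : Type*} [Fintype V] [DecidableEq V]
    (T : SimpleGraph V) (hacyc : T.IsAcyclic)
    (M : Matrix V V ℤ)
    (hadj : ∀ u v, T.Adj u v → M u v = 1)
    (hnadj : ∀ u v, u ≠ v → ¬T.Adj u v → M u v = 0)
    (a b : V) (hab : T.Adj a b)
    (M₀ : Matrix V V ℤ)
    (hM₀ : ∀ u v, M₀ u v = if (u = a ∧ v = b) ∨ (u = b ∧ v = a) then 0 else M u v) :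
    (-M).det =
      (-M₀).det -
        (-(M.submatrix (fun x : {v : V // v ≠ a ∧ v ≠ b} => x.val)
            (fun x : {v : V // v ≠ a ∧ v ≠ b} => x.val))).det := by
  set G := T.deleteEdges {s(a, b)}
  have hsep : ¬G.Reachable a b := SimpleGraph.isAcyclic_iff_forall_adj_isBridge.mp hacyc hab
  have hG : ∀ u v, u ≠ v → ¬G.Adj u v → (-M₀) u v = 0 := by
    intro u v huv hnot
    simp only [G, SimpleGraph.deleteEdges_adj, Set.mem_singleton_iff, Sym2.eq_iff, not_and,
      not_not] at hnot
    rw [neg_apply, hM₀, neg_eq_zero]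
    split_ifs with h
    · rfl
    · exact hnadj u v huv fun h' => h (hnot h')
  have hsplit : -M = ((-M₀).updateRow a ((-M₀) a + Pi.single b (-1))).updateRow b
      ((-M₀) b + Pi.single a (-1)) := by
    ext u v
    have hMab := hadj a b hab
    have hMba := hadj b a hab.symm
    simp only [neg_apply, updateRow_apply, Pi.add_apply, hM₀, Pi.single_apply]
    grind [hab.ne]
  have hcore : (-M₀).toSquareBlockProp (fun v => v ≠ a ∧ v ≠ b) =
      -(M.submatrix (fun x : {v : V // v ≠ a ∧ v ≠ b} => x.val)
        (fun x : {v : V // v ≠ a ∧ v ≠ b} => x.val)) := by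
    ext ⟨u, hua, hub⟩ v
    simp [toSquareBlockProp_def, hM₀, hua, hub]
  rw [hsplit, det_updateRow_add_updateRow_add hab.ne,
    det_updateRow_eq_zero_of_not_reachable G _ hG a _
      fun v hv => Pi.single_eq_of_ne (fun h : v = b => hsep (h ▸ hv)) _,
    det_updateRow_eq_zero_of_not_reachable G _ hG b _
      fun v hv => Pi.single_eq_of_ne (fun h : v = a => hsep (h ▸ hv.symm)) _,
    det_updateRow_single_updateRow_single hab.ne, hcore]
  ring

/-- Edge-deletion formula for determinants of symmetric matrices adapted to a tree:
if `e = {a, b}` is an edge of the tree `T`, `M₀` agrees with `M` except that the `(a,b)` and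
`(b,a)` entries are `0`, and `M''` is the principal submatrix obtained by deleting the rows
and columns indexed by `a` and `b`, then `det(-M) = det(-M₀) - det(-M'')`. -/
theorem det_neg_adapted_edge_deletion {V : Type*} [Fintype V] [DecidableEq V]
    (T : SimpleGraph V) (hconn : T.Connected) (hacyc : T.IsAcyclic)
    (M : Matrix V V ℤ) (hsym : M.IsSymm)
    (hadj : ∀ u v, T.Adj u v → M u v = 1)
    (hnadj : ∀ u v, u ≠ v → ¬T.Adj u v → M u v = 0)
    (a b : V) (hab : T.Adj a b)
    (M₀ : Matrix V V ℤ)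
    (hM₀ : ∀ u v, M₀ u v = if (u = a ∧ v = b) ∨ (u = b ∧ v = a) then 0 else M u v) :
    (-M).det =
      (-M₀).det -
        (-(M.submatrix (fun x : {v : V // v ≠ a ∧ v ≠ b} => x.val)
            (fun x : {v : V // v ≠ a ∧ v ≠ b} => x.val))).det :=
  det_neg_adapted_edge_deletion_general T hacyc M hadj hnadj a b hab M₀ hM₀
end

section
/- Let T be a finite tree with vertex set V and let M be a symmetric real matrix adapted to T such that −M is positive definite (in particular M is invertible). For any two vertices a, b ∈ V, let P ⊆ V be the set of vertices lying on the unique path in T from a to b (including a and b). Then −det(−M) · (M⁻¹)_{ab} equals the product, over the connected components C of the induced subgraph of T on V ∖ P, of det(−M|_C), where M|_C denotes the principal submatrix of M on the vertex set of C (the empty product being 1). -/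
open scoped Classical

namespace TreeDetAux

open Finset

variable {V : Type*}

lemma getElem_idx_congr {α : Type*} (l : List α) {i j : ℕ} (h : i = j) (hi : i < l.length) :
    l[i]'hi = l[j]'(h ▸ hi) := by subst h; rfl



lemma walk_of_fn (T : SimpleGraph V) (f : ℕ → V) :
    ∀ m : ℕ, (∀ i < m, T.Adj (f i) (f (i + 1))) →
      ∃ p : T.Walk (f 0) (f m), p.support = (List.range (m + 1)).map f := by
  intro m
  induction m with
  | zero => exact fun _ => ⟨SimpleGraph.Walk.nil, by simp [List.range_succ]⟩
  | succ m ih =>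
    intro h
    obtain ⟨p, hp⟩ := ih fun i hi => h i (Nat.lt_succ_of_lt hi)
    refine ⟨p.concat (h m (Nat.lt_succ_self m)), ?_⟩
    rw [SimpleGraph.Walk.support_concat, hp]
    rw [show m + 1 + 1 = (m+1) + 1 from rfl, List.range_succ (n := m+1), List.map_append]
    simp [List.concat_eq_append]

lemma key_orbit [Fintype V] [DecidableEq V] (T : SimpleGraph V) (hacyc : T.IsAcyclic)
    {a b : V} (w : T.Walk a b) (hw : w.IsPath)
    (σ : Equiv.Perm V) (h1 : σ a = b)
    (h2 : ∀ i, i ≠ a → σ i = i ∨ T.Adj (σ i) i) :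
    ∀ v ∈ w.reverse.support, σ v = (w.reverse.support).formPerm v := by
  by_cases hab : a = b
  · subst hab
    have hnil : w = SimpleGraph.Walk.nil := SimpleGraph.Walk.isPath_iff_eq_nil.mp hw
    subst hnil
    intro v hv
    simp only [SimpleGraph.Walk.reverse_nil, SimpleGraph.Walk.support_nil,
      List.mem_singleton] at hv
    subst hv
    simp [List.formPerm_singleton, h1]
  · -- existence of a return time
    have hex : ∃ n, 0 < n ∧ (σ ^ n) b = a := by
      have hσne : σ ≠ 1 := by
        intro h; rw [h] at h1; exact hab h1
      have hord : 2 ≤ orderOf σ := by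
        have h1' : orderOf σ ≠ 1 := fun h => hσne (orderOf_eq_one_iff.mp h)
        have h0 : 0 < orderOf σ := orderOf_pos σ
        omega
      refine ⟨orderOf σ - 1, by omega, ?_⟩
      have hkey : σ ((σ ^ (orderOf σ - 1)) b) = σ a := by
        rw [h1]
        have hmul : σ * σ ^ (orderOf σ - 1) = σ ^ orderOf σ := by
          rw [← pow_succ']
          congr 1
          omega
        calc σ ((σ ^ (orderOf σ - 1)) b) = (σ * σ ^ (orderOf σ - 1)) b := rfl
          _ = (σ ^ orderOf σ) b := by rw [hmul]
          _ = b := by rw [pow_orderOf_eq_one]; rfl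
      exact σ.injective hkey
    set m := Nat.find hex with hm
    obtain ⟨hm0, hmb⟩ := Nat.find_spec hex
    have hmin : ∀ k, k < m → ¬(0 < k ∧ (σ ^ k) b = a) := fun k hk => Nat.find_min hex hk
    set f : ℕ → V := fun i => (σ ^ i) b with hf
    have hf0 : f 0 = b := by simp [hf]
    have hfsucc : ∀ i, f (i + 1) = σ (f i) := by
      intro i; simp [hf, pow_succ']
    have hσb : σ b ≠ b := by
      intro h
      have : ∀ n, (σ ^ n) b = b := by
        intro n; induction n with
        | zero => simp
        | succ n ihn => rw [pow_succ', Equiv.Perm.mul_apply, ihn, h]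
      exact hab ((this m ▸ hmb).symm)
    have hfne : ∀ i, i < m → f i ≠ a := by
      intro i hi hia
      rcases Nat.eq_zero_or_pos i with h0 | h0
      · rw [h0, hf0] at hia; exact hab hia.symm
      · exact hmin i hi ⟨h0, hia⟩
    have hstep : ∀ i, i < m → T.Adj (f i) (f (i + 1)) := by
      intro i hi
      rcases h2 (f i) (hfne i hi) with hfix | hadj
      · exfalso
        have : (σ ^ i) (σ b) = (σ ^ i) b := by
          have e1 : (σ ^ i) (σ b) = σ ((σ ^ i) b) := by
            rw [← Equiv.Perm.mul_apply, ← Equiv.Perm.mul_apply]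
            congr 1
            exact (Commute.self_pow σ i).symm ▸ rfl
          rw [e1]; exact hfix
        exact hσb ((σ ^ i).injective this)
      · rw [hfsucc]
        exact hadj.symm
    -- distinctness
    have hinj : ∀ i j, i ≤ j → j ≤ m → f i = f j → i = j := by
      intro i j hij hjm hfij
      by_contra hne
      have hd : 0 < j - i := by omega
      have hdb : (σ ^ (j - i)) b = b := by
        have : (σ ^ i) ((σ ^ (j - i)) b) = (σ ^ i) b := by
          rw [← Equiv.Perm.mul_apply, ← pow_add]
          have : i + (j - i) = j := by omega
          rw [this]
          exact hfij.symm
        exact (σ ^ i).injective this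
      have hsplit : (σ ^ (m - (j - i))) b = a := by
        have : (σ ^ (m - (j - i))) ((σ ^ (j - i)) b) = (σ ^ m) b := by
          rw [← Equiv.Perm.mul_apply, ← pow_add]
          congr 2
          exact Nat.sub_add_cancel (by omega)
        rw [hdb] at this
        rw [this, hmb]
      have hlt : m - (j - i) < m := by omega
      have := hmin _ hlt
      rcases Nat.eq_zero_or_pos (m - (j - i)) with h0 | h0
      · rw [h0] at hsplit; simp at hsplit; exact hab hsplit.symm
      · exact this ⟨h0, hsplit⟩
    obtain ⟨p, hp⟩ := walk_of_fn T f m hstep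
    have hq : ∃ q : T.Walk b a, q.support = (List.range (m + 1)).map f := by
      refine ⟨p.copy hf0 hmb, ?_⟩
      rw [SimpleGraph.Walk.support_copy, hp]
    obtain ⟨q, hqsup⟩ := hq
    have hnodup : ((List.range (m + 1)).map f).Nodup := by
      refine List.Nodup.map_on ?_ List.nodup_range
      intro i hi j hj hfij
      rw [List.mem_range] at hi hj
      rcases le_total i j with h | h
      · exact hinj i j h (by omega) hfij
      · exact (hinj j i h (by omega) hfij.symm).symm
    have hqpath : q.IsPath := by
      rw [SimpleGraph.Walk.isPath_def, hqsup]; exact hnodup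
    have hpatheq : w.reverse = q := by
      have := SimpleGraph.isAcyclic_iff_path_unique.mp hacyc
        (⟨w.reverse, hw.reverse⟩ : T.Path b a) (⟨q, hqpath⟩ : T.Path b a)
      exact congrArg Subtype.val this
    have hLsup : w.reverse.support = (List.range (m + 1)).map f := by
      rw [hpatheq, hqsup]
    intro v hv
    rw [hLsup] at hv ⊢
    obtain ⟨i, hi, rfl⟩ := List.mem_map.mp hv
    rw [List.mem_range] at hi
    have hlen : ((List.range (m + 1)).map f).length = m + 1 := by simp
    have hget : ∀ j (hj : j < m + 1),
        ((List.range (m + 1)).map f)[j]'(by simpa [hlen] using hj) = f j := by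
      intro j hj
      simp
    have hform := List.formPerm_apply_getElem ((List.range (m + 1)).map f) hnodup i
      (by simpa [hlen] using hi)
    simp only [List.getElem_map, List.getElem_range, List.length_map,
      List.length_range] at hform
    rw [hform]
    rcases Nat.lt_or_ge i m with him | him
    · rw [Nat.mod_eq_of_lt (by omega), hfsucc]
    · have him' : i = m := by omega
      subst him'
      rw [Nat.mod_self]
      show σ (f m) = f 0
      have : f m = a := hmb
      rw [this, h1, hf0]


lemma det_updateRow [Fintype V] [DecidableEq V] (T : SimpleGraph V) (hacyc : T.IsAcyclic)
    (M : Matrix V V ℝ)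
    (hadj : ∀ u v, T.Adj u v → M u v = 1)
    (hnadj : ∀ u v, u ≠ v → ¬T.Adj u v → M u v = 0)
    {a b : V} (w : T.Walk a b) (hw : w.IsPath) :
    (M.updateRow b (Pi.single a 1)).det =
      (-1 : ℝ) ^ w.length *
        (M.submatrix (fun x : {v : V | v ∉ w.support} => (x : V))
          (fun x : {v : V | v ∉ w.support} => (x : V))).det := by
  set L : List V := w.reverse.support with hLdef
  set σ₀ : Equiv.Perm V := L.formPerm with hσ₀def
  set N : Matrix V V ℝ := M.updateRow b (Pi.single a 1) with hNdef
  have hLnd : L.Nodup := hw.reverse.support_nodup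
  have hmemL : ∀ v, v ∈ L ↔ v ∈ w.support := by
    intro v; rw [hLdef, SimpleGraph.Walk.support_reverse, List.mem_reverse]
  have hLlen : L.length = w.length + 1 := by
    rw [hLdef, SimpleGraph.Walk.support_reverse, List.length_reverse,
      SimpleGraph.Walk.length_support]
  have hLpos : 0 < L.length := by omega
  have hL0 : L[0]'hLpos = b := by
    rw [← List.head_eq_getElem_zero (by simp [hLdef])]
    exact SimpleGraph.Walk.head_support w.reverse
  have hLlast : L[L.length - 1]'(by omega) = a := by
    have h2 := SimpleGraph.Walk.getLast_support w.reverse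
    rw [List.getLast_eq_getElem] at h2
    exact h2
  have hchain : ∀ (j : ℕ) (hj : j + 1 < L.length), T.Adj (L[j]'(by omega)) (L[j+1]'hj) := by
    intro j hj
    have hlen : L.length = w.reverse.support.length := by rw [hLdef]
    have := List.isChain_iff_getElem.mp (SimpleGraph.Walk.isChain_adj_support w.reverse) j (by omega)
    simpa only [List.get_eq_getElem] using this
  have hbL : b ∈ L := by rw [hmemL]; exact SimpleGraph.Walk.end_mem_support w
  have haL : a ∈ L := by rw [hmemL]; exact SimpleGraph.Walk.start_mem_support w
  have hNσ₀ : ∀ i ∈ L, N (σ₀ i) i = 1 := by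
    intro i hi
    obtain ⟨j, hj, rfl⟩ := List.mem_iff_getElem.mp hi
    rw [hσ₀def, List.formPerm_apply_getElem L hLnd j hj]
    rcases Nat.lt_or_ge (j + 1) L.length with hlt | hge
    · rw [getElem_idx_congr L (Nat.mod_eq_of_lt hlt)]
      have hne : L[j + 1]'hlt ≠ b := by
        rw [← hL0]
        intro hEq
        have := (List.Nodup.getElem_inj_iff hLnd).mp hEq
        omega
      rw [hNdef, Matrix.updateRow_ne hne]
      exact hadj _ _ (hchain j hlt).symm
    · have hmod : (j + 1) % L.length = 0 := by
        have : j + 1 = L.length := by omega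
        rw [this, Nat.mod_self]
      rw [getElem_idx_congr L hmod, hL0]
      have hja : L[j]'hj = a := by
        rw [getElem_idx_congr L (show j = L.length - 1 by omega)]
        exact hLlast
      rw [hja, hNdef, Matrix.updateRow_self, Pi.single_eq_same]
  -- the "good" permutation set
  set P : Equiv.Perm V → Prop := fun σ => ∀ v ∈ L, σ v = σ₀ v with hPdef
  have hgood : ∀ σ : Equiv.Perm V,
      ((Equiv.Perm.sign σ : ℤ) : ℝ) * ∏ i, N (σ i) i ≠ 0 → P σ := by
    intro σ hne
    have hprod : (∏ i, N (σ i) i) ≠ 0 := right_ne_zero_of_mul hne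
    have hfac : ∀ i, N (σ i) i ≠ 0 := by
      intro i hzero
      exact hprod (Finset.prod_eq_zero (mem_univ i) hzero)
    have h1 : σ a = b := by
      have hfb := hfac (σ.symm b)
      rw [Equiv.apply_symm_apply, hNdef, Matrix.updateRow_self] at hfb
      have hba : σ.symm b = a := by
        by_contra hne'
        rw [Pi.single_eq_of_ne hne'] at hfb
        exact hfb rfl
      rw [← hba, Equiv.apply_symm_apply]
    have h2 : ∀ i, i ≠ a → σ i = i ∨ T.Adj (σ i) i := by
      intro i hia
      by_contra hcon
      push_neg at hcon
      have hib : σ i ≠ b := fun h => hia (σ.injective (h.trans h1.symm))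
      have := hfac i
      rw [hNdef, Matrix.updateRow_ne hib] at this
      exact this (hnadj _ _ hcon.1 hcon.2)
    exact key_orbit T hacyc w hw σ h1 h2
  rw [Matrix.det_apply']
  rw [← Finset.sum_filter_of_ne (p := P) (fun σ _ h => hgood σ h)]
  -- reindex by permutations of the complement
  set Sset : Set V := {v : V | v ∉ w.support} with hSdef
  have hSiff : ∀ v, v ∈ Sset ↔ v ∉ L := by
    intro v
    rw [hmemL]
    rfl
  set Φ : Equiv.Perm ↥Sset → Equiv.Perm V := fun τ => σ₀ * Equiv.Perm.ofSubtype τ with hΦdef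
  have hofix : ∀ (τ : Equiv.Perm ↥Sset) (v : V), v ∈ L → Equiv.Perm.ofSubtype τ v = v := by
    intro τ v hv
    exact Equiv.Perm.ofSubtype_apply_of_not_mem τ (by rw [hSiff]; simp [hv])
  have homem : ∀ (τ : Equiv.Perm ↥Sset) (v : V) (hv : v ∈ Sset),
      Equiv.Perm.ofSubtype τ v = (τ ⟨v, hv⟩ : ↥Sset) := by
    intro τ v hv
    exact Equiv.Perm.ofSubtype_apply_of_mem τ hv
  have hσ₀fix : ∀ v, v ∉ L → σ₀ v = v := by
    intro v hv
    exact List.formPerm_apply_of_notMem hv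
  have hσ₀mem : ∀ v, v ∈ L → σ₀ v ∈ L := by
    intro v hv
    exact List.formPerm_apply_mem_of_mem hv
  have himg : Finset.univ.filter P = Finset.image Φ Finset.univ := by
    ext σ
    simp only [Finset.mem_filter, Finset.mem_image, Finset.mem_univ, true_and]
    constructor
    · intro hσ
      have hgfix : ∀ v ∈ L, (σ₀⁻¹ * σ) v = v := by
        intro v hv
        simp [Equiv.Perm.mul_apply, hσ v hv]
      have hpres : ∀ x, x ∈ Sset ↔ (σ₀⁻¹ * σ) x ∈ Sset := by
        intro x
        by_cases hx : x ∈ L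
        · constructor
          · intro hmem; exact absurd hmem (by rw [hSiff]; simp [hx])
          · intro hmem
            rw [hgfix x hx] at hmem
            exact hmem
        · have hx' : x ∈ Sset := by rw [hSiff]; exact hx
          refine ⟨fun _ => ?_, fun _ => hx'⟩
          rw [hSiff]
          intro hmem
          have := hgfix _ hmem
          have hxx : (σ₀⁻¹ * σ) x = x := (σ₀⁻¹ * σ).injective this
          rw [hxx] at hmem
          exact hx hmem
      refine ⟨(σ₀⁻¹ * σ).subtypePerm (fun x => (hpres x).symm), ?_⟩
      ext v
      rw [hΦdef]
      by_cases hv : v ∈ Sset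
      · simp only [Equiv.Perm.mul_apply]
        rw [homem _ v hv]
        simp [Equiv.Perm.subtypePerm_apply, Equiv.Perm.mul_apply]
      · have hvL : v ∈ L := by by_contra h; exact hv ((hSiff v).mpr h)
        simp only [Equiv.Perm.mul_apply]
        rw [hofix _ v hvL, hσ v hvL]
    · rintro ⟨τ, rfl⟩ v hv
      rw [hΦdef]
      simp only [Equiv.Perm.mul_apply]
      rw [hofix τ v hv]
  have hinjΦ : ∀ x ∈ Finset.univ, ∀ y ∈ Finset.univ, Φ x = Φ y → x = y := by
    intro τ₁ _ τ₂ _ h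
    rw [hΦdef] at h
    have h' : Equiv.Perm.ofSubtype τ₁ = Equiv.Perm.ofSubtype τ₂ := mul_left_cancel h
    ext v
    have := congrArg (fun (π : Equiv.Perm V) => π v.val) h'
    rw [homem τ₁ v.val v.prop, homem τ₂ v.val v.prop] at this
    exact_mod_cast this
  rw [himg, Finset.sum_image hinjΦ]
  -- per-term simplification
  have hterm : ∀ τ : Equiv.Perm ↥Sset,
      ((Equiv.Perm.sign (Φ τ) : ℤ) : ℝ) * ∏ i, N ((Φ τ) i) i =
        ((Equiv.Perm.sign σ₀ : ℤ) : ℝ) *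
          (((Equiv.Perm.sign τ : ℤ) : ℝ) *
            ∏ i : ↥Sset, (M.submatrix (fun x : ↥Sset => (x : V)) (fun x : ↥Sset => (x : V))) (τ i) i) := by
    intro τ
    have hsign : ((Equiv.Perm.sign (Φ τ) : ℤ) : ℝ) =
        ((Equiv.Perm.sign σ₀ : ℤ) : ℝ) * ((Equiv.Perm.sign τ : ℤ) : ℝ) := by
      rw [hΦdef]
      simp only [Equiv.Perm.sign_mul, Equiv.Perm.sign_ofSubtype]
      push_cast
      ring
    rw [hsign]
    have hsplit : ∏ i, N ((Φ τ) i) i =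
        (∏ i ∈ L.toFinset, N ((Φ τ) i) i) * ∏ i ∈ L.toFinsetᶜ, N ((Φ τ) i) i :=
      (Finset.prod_mul_prod_compl L.toFinset _).symm
    have hone : ∏ i ∈ L.toFinset, N ((Φ τ) i) i = 1 := by
      refine Finset.prod_eq_one ?_
      intro i hi
      rw [List.mem_toFinset] at hi
      rw [hΦdef]
      simp only [Equiv.Perm.mul_apply]
      rw [hofix τ i hi]
      exact hNσ₀ i hi
    have hrest : ∏ i ∈ L.toFinsetᶜ, N ((Φ τ) i) i =
        ∏ i : ↥Sset, (M.submatrix (fun x : ↥Sset => (x : V)) (fun x : ↥Sset => (x : V))) (τ i) i := by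
      rw [Finset.prod_subtype (p := fun v => v ∈ Sset) L.toFinsetᶜ
        (by intro x; rw [Finset.mem_compl, List.mem_toFinset]; exact (hSiff x).symm)
        (fun i => N ((Φ τ) i) i)]
      refine Finset.prod_congr rfl ?_
      intro i _
      rw [hΦdef]
      simp only [Equiv.Perm.mul_apply]
      rw [homem τ i.val i.prop]
      have hτS : ((τ i : ↥Sset) : V) ∈ Sset := (τ i).prop
      have hτL : ((τ i : ↥Sset) : V) ∉ L := (hSiff _).mp hτS
      rw [hσ₀fix _ hτL]
      have hτb : ((τ i : ↥Sset) : V) ≠ b := by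
        intro h
        exact hτL (h ▸ hbL)
      rw [hNdef, Matrix.updateRow_ne hτb]
      rfl
    rw [hsplit, hone, hrest, one_mul, mul_assoc]
  rw [Finset.sum_congr rfl (fun τ _ => hterm τ)]
  rw [← Finset.mul_sum, ← Matrix.det_apply']
  congr 1
  -- sign of σ₀
  rcases Nat.eq_zero_or_pos w.length with hk | hk
  · have hlen1 : L.length = 1 := by omega
    obtain ⟨x, hx⟩ := List.length_eq_one_iff.mp hlen1
    rw [hσ₀def, hx, List.formPerm_singleton, hk]
    simp
  · have hlen2 : 2 ≤ L.length := by omega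
    have hcyc : σ₀.IsCycle := List.isCycle_formPerm hLnd hlen2
    have hsupp : σ₀.support = L.toFinset := by
      rw [hσ₀def]
      exact List.support_formPerm_of_nodup L hLnd (by
        intro x hx
        rw [hx] at hlen2
        simp at hlen2)
    have hcard : σ₀.support.card = w.length + 1 := by
      rw [hsupp, List.toFinset_card_of_nodup hLnd, hLlen]
    have := hcyc.sign
    rw [hcard] at this
    rw [this]
    push_cast
    ring

lemma det_blocks {I : Type*} [Fintype I] [DecidableEq I] {K : Type*} [Fintype K] [DecidableEq K] (A : Matrix I I ℝ) (q : I → K)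
    (h : ∀ i j, q i ≠ q j → A i j = 0) :
    A.det = ∏ k : K, (A.toSquareBlock q k).det := by
  classical
  let e : K ≃ Fin (Fintype.card K) := Fintype.equivFin K
  have hbt : A.BlockTriangular (e ∘ q) := by
    intro i j hij
    refine h i j fun hq => ?_
    rw [Function.comp, Function.comp, hq] at hij
    exact lt_irrefl _ hij
  rw [hbt.det_fintype]
  rw [← Equiv.prod_comp e fun k => (A.toSquareBlock (e ∘ q) k).det]
  refine Finset.prod_congr rfl fun k _ => ?_
  have hiff : ∀ i, q i = k ↔ (e ∘ q) i = e k := by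
    intro i
    constructor
    · intro h'; rw [Function.comp, h']
    · intro h'; exact e.injective h'
  let φ : {i // q i = k} ≃ {i // (e ∘ q) i = e k} := Equiv.subtypeEquivRight hiff
  have : A.toSquareBlock q k = (A.toSquareBlock (e ∘ q) (e k)).submatrix φ φ := by
    ext i j
    rfl
  rw [this, Matrix.det_submatrix_equiv_self]


end TreeDetAux

open Finset

/-- For a symmetric matrix `M` adapted to a tree `T` with `-M` positive definite, and two
vertices `a, b`, the quantity `-det(-M)·(M⁻¹)_{ab}` equals the product, over the connected
components `C` of the induced subgraph of `T` on the complement of the vertex set `P` of the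
(unique) path from `a` to `b`, of `det(-M|_C)`. -/
theorem neg_det_mul_inv_entry_eq_prod_components {V : Type*} [Fintype V] [DecidableEq V]
    (T : SimpleGraph V) (hconn : T.Connected) (hacyc : T.IsAcyclic)
    (M : Matrix V V ℝ) (hsym : M.IsSymm)
    (hadj : ∀ u v, T.Adj u v → M u v = 1)
    (hnadj : ∀ u v, u ≠ v → ¬T.Adj u v → M u v = 0)
    (hpd : (-M).PosDef)
    (a b : V) (w : T.Walk a b) (hw : w.IsPath) :
    -((-M).det) * (M⁻¹ a b) =
      ∏ᶠ C : (T.induce {v : V | v ∉ w.support}).ConnectedComponent,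
        (-(M.submatrix (fun x : C.supp => (x.val.val : V))
            (fun x : C.supp => (x.val.val : V)))).det := by
  have hdetneg : (0 : ℝ) < (-M).det := hpd.det_pos
  have hdetM : M.det ≠ 0 := by
    intro h
    rw [Matrix.det_neg, h, mul_zero] at hdetneg
    exact lt_irrefl _ hdetneg
  haveI : Fintype (T.induce {v : V | v ∉ w.support}).ConnectedComponent := Fintype.ofFinite _
  rw [finprod_eq_prod_of_fintype]
  -- LHS rewriting
  have hinv : M⁻¹ a b = M.det⁻¹ * (M.updateRow b (Pi.single a 1)).det := by
    rw [Matrix.inv_def, Matrix.smul_apply, Ring.inverse_eq_inv', smul_eq_mul,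
      Matrix.adjugate_apply]
  rw [hinv, TreeDetAux.det_updateRow T hacyc M hadj hnadj w hw]
  have hcross : ∀ i j : ↥{v : V | v ∉ w.support},
      (T.induce {v : V | v ∉ w.support}).connectedComponentMk i ≠
        (T.induce {v : V | v ∉ w.support}).connectedComponentMk j →
      ((-M).submatrix (fun x : ↥{v : V | v ∉ w.support} => (x : V))
        (fun x : ↥{v : V | v ∉ w.support} => (x : V))) i j = 0 := by
    intro i j hq
    have hij : (i : V) ≠ (j : V) := by
      intro h
      exact hq (congrArg _ (Subtype.ext h))
    have hnadj' : ¬T.Adj (i : V) (j : V) := by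
      intro hTadj
      have hadj' : (T.induce {v : V | v ∉ w.support}).Adj i j := hTadj
      exact hq (SimpleGraph.ConnectedComponent.sound hadj'.reachable)
    have hM0 : M (i : V) (j : V) = 0 := hnadj _ _ hij hnadj'
    simp [hM0]
  have hblocks : (∏ C : (T.induce {v : V | v ∉ w.support}).ConnectedComponent,
      (-(M.submatrix (fun x : C.supp => (x.val.val : V))
          (fun x : C.supp => (x.val.val : V)))).det) =
      ((-M).submatrix (fun x : ↥{v : V | v ∉ w.support} => (x : V))
        (fun x : ↥{v : V | v ∉ w.support} => (x : V))).det := by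
    have h1 := TreeDetAux.det_blocks
      ((-M).submatrix (fun x : ↥{v : V | v ∉ w.support} => (x : V))
        (fun x : ↥{v : V | v ∉ w.support} => (x : V)))
      (fun v => (T.induce {v : V | v ∉ w.support}).connectedComponentMk v) hcross
    rw [h1]
    refine Finset.prod_congr rfl fun C _ => ?_
    let e : {i : ↥{v : V | v ∉ w.support} //
        (T.induce {v : V | v ∉ w.support}).connectedComponentMk i = C} ≃ ↥C.supp :=
      Equiv.subtypeEquivRight (fun x => (C.mem_supp_iff x).symm)
    have heq : (((-M).submatrix (fun x : ↥{v : V | v ∉ w.support} => (x : V))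
        (fun x : ↥{v : V | v ∉ w.support} => (x : V))).toSquareBlock
          (fun v => (T.induce {v : V | v ∉ w.support}).connectedComponentMk v) C) =
        ((-(M.submatrix (fun x : C.supp => (x.val.val : V))
          (fun x : C.supp => (x.val.val : V)))).submatrix e e) := by
      ext i j
      rfl
    rw [heq, Matrix.det_submatrix_equiv_self]
  rw [hblocks]
  -- cardinalities
  have hcard : Fintype.card V = w.length + 1 + Fintype.card ↥{v : V | v ∉ w.support} := by
    have h1 : (Finset.univ.filter fun v : V => v ∈ {v : V | v ∉ w.support}) =
        w.support.toFinsetᶜ := by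
      ext v
      simp [List.mem_toFinset]
    have h2 : Fintype.card ↥{v : V | v ∉ w.support} =
        Fintype.card V - w.support.toFinset.card := by
      rw [Fintype.card_subtype, h1, Finset.card_compl]
    have h3 : w.support.toFinset.card = w.length + 1 := by
      rw [List.toFinset_card_of_nodup hw.support_nodup, SimpleGraph.Walk.length_support]
    have h4 : w.support.toFinset.card ≤ Fintype.card V := by
      exact Finset.card_le_card (Finset.subset_univ _) |>.trans_eq (Finset.card_univ)
    omega
  have hAneg : ((-M).submatrix (fun x : ↥{v : V | v ∉ w.support} => (x : V))
      (fun x : ↥{v : V | v ∉ w.support} => (x : V))) =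
      -((M).submatrix (fun x : ↥{v : V | v ∉ w.support} => (x : V))
        (fun x : ↥{v : V | v ∉ w.support} => (x : V))) := by
    ext i j
    simp
  have key : ∀ (x y : ℝ) (k s : ℕ), x ≠ 0 →
      -((-1 : ℝ) ^ (k + 1 + s) * x) * (x⁻¹ * ((-1 : ℝ) ^ k * y)) = (-1 : ℝ) ^ s * y := by
    intro x y k s hx
    have h1 : ((-1 : ℝ)) ^ k * (-1 : ℝ) ^ k = 1 := by
      rw [← pow_add]
      exact Even.neg_one_pow ⟨k, by ring⟩
    rw [pow_add, pow_succ]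
    calc -((-1 : ℝ) ^ k * (-1) * (-1 : ℝ) ^ s * x) * (x⁻¹ * ((-1 : ℝ) ^ k * y))
        = ((-1 : ℝ) ^ k * (-1 : ℝ) ^ k) * ((-1 : ℝ) ^ s * y) * (x * x⁻¹) := by ring
      _ = 1 * ((-1 : ℝ) ^ s * y) * 1 := by rw [h1, mul_inv_cancel₀ hx]
      _ = (-1 : ℝ) ^ s * y := by ring
  rw [hAneg, Matrix.det_neg, Matrix.det_neg, hcard]
  exact key M.det _ w.length _ hdetM
end

section
/- For every integer q ≥ 1, the quotient ring ℂ[X, Y, Z]/(X·Y − Z^q) is an integral domain and is integrally closed in its field of fractions (i.e. the ring of the A_{q−1} hypersurface singularity is normal). -/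
open MvPolynomial

noncomputable section
abbrev Bp := MvPolynomial (Fin 2) ℂ
abbrev Ap := MvPolynomial (Fin 3) ℂ

def pq (q : ℕ) : Ap := X 0 * X 1 - X 2 ^ q
def Iq (q : ℕ) : Ideal Ap := Ideal.span {pq q}
def φq (q : ℕ) : Ap →ₐ[ℂ] Bp := aeval ![X 0 ^ q, X 1 ^ q, X 0 * X 1]

lemma phi_pq (q : ℕ) : φq q (pq q) = 0 := by
  simp [φq, pq]
  ring

-- monomial decomposition lemmas
lemma fin3_decomp (d : Fin 3 →₀ ℕ) :
    d = Finsupp.single 0 (d 0) + Finsupp.single 1 (d 1) + Finsupp.single 2 (d 2) := by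
  ext i
  fin_cases i <;> simp [Finsupp.single_apply]

lemma fin2_decomp (d : Fin 2 →₀ ℕ) :
    d = Finsupp.single 0 (d 0) + Finsupp.single 1 (d 1) := by
  ext i
  fin_cases i <;> simp [Finsupp.single_apply]

lemma mX_eq (a b c : ℕ) (r : ℂ) :
    (monomial (Finsupp.single 0 a + Finsupp.single 1 b + Finsupp.single 2 c) r : Ap)
      = C r * X 0 ^ a * X 1 ^ b * X 2 ^ c := by
  simp [X_pow_eq_monomial, monomial_mul, C_mul_monomial]

lemma mX2_eq (a b : ℕ) (r : ℂ) :
    (monomial (Finsupp.single 0 a + Finsupp.single 1 b) r : Bp)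
      = C r * X 0 ^ a * X 1 ^ b := by
  simp [X_pow_eq_monomial, monomial_mul, C_mul_monomial]

def Edeg (q : ℕ) (d : Fin 3 →₀ ℕ) : Fin 2 →₀ ℕ :=
  Finsupp.single 0 (q * d 0 + d 2) + Finsupp.single 1 (q * d 1 + d 2)

lemma phi_monomial (q : ℕ) (d : Fin 3 →₀ ℕ) (r : ℂ) :
    φq q (monomial d r) = monomial (Edeg q d) r := by
  rw [φq, aeval_monomial, Finsupp.prod_pow, Fin.prod_univ_three]
  rw [Edeg, mX2_eq]
  simp only [Matrix.cons_val_zero, Matrix.cons_val_one, Matrix.head_cons,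
    Matrix.cons_val_two, Matrix.tail_cons, algebraMap_eq]
  ring

lemma pq_mem (q : ℕ) : pq q ∈ Iq q := Ideal.subset_span rfl

-- one-variable-notation
def mX (a b c : ℕ) : Ap := X 0 ^ a * X 1 ^ b * X 2 ^ c

lemma reduce_step (q a b c : ℕ) :
    mX (a+1) (b+1) c - mX a b (c + q) = mX a b c * pq q := by
  simp only [mX, pq]
  ring

lemma reduce_aux (q : ℕ) (m : ℕ) : ∀ (a b c : ℕ),
    mX (a+m) (b+m) c - mX a b (c + q*m) ∈ Iq q := by
  induction m with
  | zero => intro a b c; simp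
  | succ m ih =>
    intro a b c
    have h1 : mX (a+(m+1)) (b+(m+1)) c - mX a b (c + q*(m+1))
        = (mX ((a+m)+1) ((b+m)+1) c - mX (a+m) (b+m) (c + q))
          + (mX (a+m) (b+m) (c+q) - mX a b ((c+q) + q*m)) := by
      have e1 : a + (m+1) = (a+m)+1 := by omega
      have e2 : b + (m+1) = (b+m)+1 := by omega
      have e3 : c + q*(m+1) = (c+q) + q*m := by ring
      rw [e1, e2, e3]; ring
    rw [h1]
    exact Ideal.add_mem _ (by rw [reduce_step]; exact Ideal.mul_mem_left _ _ (pq_mem q))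
      (ih _ _ _)

def nf (q : ℕ) (d : Fin 3 →₀ ℕ) : Fin 3 →₀ ℕ :=
  Finsupp.single 0 (d 0 - min (d 0) (d 1)) + Finsupp.single 1 (d 1 - min (d 0) (d 1))
    + Finsupp.single 2 (d 2 + q * min (d 0) (d 1))

lemma nf_apply (q : ℕ) (d : Fin 3 →₀ ℕ) :
    nf q d 0 = d 0 - min (d 0) (d 1) ∧ nf q d 1 = d 1 - min (d 0) (d 1) ∧
      nf q d 2 = d 2 + q * min (d 0) (d 1) := by
  refine ⟨?_, ?_, ?_⟩ <;> simp [nf, Finsupp.single_apply]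

lemma nf_normal (q : ℕ) (d : Fin 3 →₀ ℕ) : nf q d 0 = 0 ∨ nf q d 1 = 0 := by
  obtain ⟨h0, h1, -⟩ := nf_apply q d
  rw [h0, h1]; omega

lemma monomial_reduce (q : ℕ) (d : Fin 3 →₀ ℕ) (r : ℂ) :
    (monomial d r : Ap) - monomial (nf q d) r ∈ Iq q := by
  obtain ⟨h0, h1, h2⟩ := nf_apply q d
  have hd : (monomial d r : Ap) = C r * mX (d 0) (d 1) (d 2) := by
    conv_lhs => rw [fin3_decomp d]
    rw [mX_eq, mX]; ring
  have hnf : (monomial (nf q d) r : Ap)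
      = C r * mX (d 0 - min (d 0) (d 1)) (d 1 - min (d 0) (d 1)) (d 2 + q * min (d 0) (d 1)) := by
    conv_lhs => rw [fin3_decomp (nf q d)]
    rw [h0, h1, h2, mX_eq, mX]; ring
  rw [hd, hnf, ← mul_sub]
  refine Ideal.mul_mem_left _ _ ?_
  have e1 : d 0 = (d 0 - min (d 0) (d 1)) + min (d 0) (d 1) := by omega
  have e2 : d 1 = (d 1 - min (d 0) (d 1)) + min (d 0) (d 1) := by omega
  have h := reduce_aux q (min (d 0) (d 1)) (d 0 - min (d 0) (d 1)) (d 1 - min (d 0) (d 1)) (d 2)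
  rw [← e1, ← e2] at h
  exact h

lemma Edeg_apply (q : ℕ) (d : Fin 3 →₀ ℕ) :
    Edeg q d 0 = q * d 0 + d 2 ∧ Edeg q d 1 = q * d 1 + d 2 := by
  constructor <;> simp [Edeg, Finsupp.single_apply]

lemma Edeg_inj (q : ℕ) (hq : 1 ≤ q) {d d' : Fin 3 →₀ ℕ}
    (hd : d 0 = 0 ∨ d 1 = 0) (hd' : d' 0 = 0 ∨ d' 1 = 0)
    (h : Edeg q d = Edeg q d') : d = d' := by
  obtain ⟨e0, e1⟩ := Edeg_apply q d
  obtain ⟨f0, f1⟩ := Edeg_apply q d'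
  have h0 : q * d 0 + d 2 = q * d' 0 + d' 2 := by rw [← e0, ← f0, h]
  have h1 : q * d 1 + d 2 = q * d' 1 + d' 2 := by rw [← e1, ← f1, h]
  have cancel : ∀ x y : ℕ, q * x = q * y → x = y := fun x y hxy =>
    Nat.eq_of_mul_eq_mul_left (by omega) hxy
  have key : d 0 = d' 0 ∧ d 1 = d' 1 ∧ d 2 = d' 2 := by
    rcases hd with h2 | h2 <;> rcases hd' with h3 | h3
    · rw [h2, h3] at h0
      have hc : d 2 = d' 2 := by omega
      rw [hc] at h1
      exact ⟨by rw [h2, h3], cancel _ _ (by omega), hc⟩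
    · rw [h2] at h0; rw [h3] at h1
      have hz : q * (d 1 + d' 0) = 0 := by
        have := Nat.mul_add q (d 1) (d' 0); omega
      have hz1 : d 1 = 0 ∧ d' 0 = 0 := by
        have := Nat.mul_eq_zero.mp hz; omega
      refine ⟨by omega, by omega, by omega⟩
    · rw [h2] at h1; rw [h3] at h0
      have hz : q * (d 0 + d' 1) = 0 := by
        have := Nat.mul_add q (d 0) (d' 1); omega
      have hz1 : d 0 = 0 ∧ d' 1 = 0 := by
        have := Nat.mul_eq_zero.mp hz; omega
      refine ⟨by omega, by omega, by omega⟩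
    · rw [h2, h3] at h1
      have hc : d 2 = d' 2 := by omega
      rw [hc] at h0
      exact ⟨cancel _ _ (by omega), by rw [h2, h3], hc⟩
  rw [fin3_decomp d, fin3_decomp d', key.1, key.2.1, key.2.2]

lemma span_le_ker (q : ℕ) : Iq q ≤ RingHom.ker (φq q).toRingHom := by
  rw [Iq, Ideal.span_le, Set.singleton_subset_iff]
  exact phi_pq q

lemma ker_eq_span (q : ℕ) (hq : 1 ≤ q) : RingHom.ker (φq q).toRingHom = Iq q := by
  refine le_antisymm ?_ (span_le_ker q)
  intro F hF
  have hF0 : φq q F = 0 := hF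
  -- normal form
  set N : Ap := ∑ d ∈ F.support, monomial (nf q d) (coeff d F) with hN
  have hFN : F - N ∈ Iq q := by
    have : F - N = ∑ d ∈ F.support,
        ((monomial d (coeff d F) : Ap) - monomial (nf q d) (coeff d F)) := by
      rw [Finset.sum_sub_distrib, support_sum_monomial_coeff, hN]
    rw [this]
    exact Ideal.sum_mem _ fun d _ => monomial_reduce q d (coeff d F)
  have hNnormal : ∀ e ∈ N.support, e 0 = 0 ∨ e 1 = 0 := by
    intro e he
    have := MvPolynomial.support_sum (s := F.support)
      (f := fun d => (monomial (nf q d) (coeff d F) : Ap)) (hN ▸ he)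
    simp only [Finset.mem_biUnion] at this
    obtain ⟨d, -, hd⟩ := this
    have : e = nf q d := by
      have := MvPolynomial.support_monomial_subset hd
      simpa using this
    rw [this]; exact nf_normal q d
  have hφN : φq q N = 0 := by
    have h1 : φq q (F - N) = 0 := span_le_ker q hFN
    rw [map_sub, hF0, zero_sub, neg_eq_zero] at h1
    exact h1
  have hNzero : N = 0 := by
    by_contra hne
    obtain ⟨e0, he0⟩ := Finset.nonempty_of_ne_empty
      (fun h => hne (MvPolynomial.support_eq_empty.mp h))
    have hco : coeff (Edeg q e0) (φq q N) = coeff e0 N := by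
      conv_lhs => rw [← support_sum_monomial_coeff N, map_sum]
      simp only [phi_monomial]
      rw [MvPolynomial.coeff_sum]
      rw [Finset.sum_eq_single e0]
      · simp [coeff_monomial]
      · intro d hd hdne
        rw [coeff_monomial, if_neg]
        intro hEd
        exact hdne (Edeg_inj q hq (hNnormal d hd) (hNnormal e0 he0) hEd)
      · intro h; exact absurd he0 h
    rw [hφN] at hco
    simp only [coeff_zero] at hco
    exact (MvPolynomial.mem_support_iff.mp he0) hco.symm
  have : F ∈ Iq q := by
    have := hFN
    rw [hNzero, sub_zero] at this
    exact this
  exact this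

section Sigma
variable (ζ : ℂ)

def σζ (ζ : ℂ) : Bp →ₐ[ℂ] Bp := aeval ![C ζ * X 0, C ζ⁻¹ * X 1]

lemma sigma_monomial (e : Fin 2 →₀ ℕ) (r : ℂ) :
    σζ ζ (monomial e r) = monomial e (ζ ^ e 0 * ζ⁻¹ ^ e 1 * r) := by
  rw [σζ, aeval_monomial, Finsupp.prod_pow, Fin.prod_univ_two]
  have hrhs : (monomial e (ζ ^ e 0 * ζ⁻¹ ^ e 1 * r) : Bp)
      = C (ζ ^ e 0 * ζ⁻¹ ^ e 1 * r) * X 0 ^ e 0 * X 1 ^ e 1 := by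
    conv_lhs => rw [fin2_decomp e]
    rw [mX2_eq]
    simp [Finsupp.single_apply]
  rw [hrhs]
  simp only [Matrix.cons_val_zero, Matrix.cons_val_one, Matrix.head_cons,
    algebraMap_eq, mul_pow, ← C_pow, map_mul]
  ring

end Sigma

lemma coeff_sigma (ζ : ℂ) (f : Bp) (e : Fin 2 →₀ ℕ) :
    coeff e (σζ ζ f) = ζ ^ e 0 * ζ⁻¹ ^ e 1 * coeff e f := by
  conv_lhs => rw [← support_sum_monomial_coeff f, map_sum]
  simp only [sigma_monomial]
  rw [MvPolynomial.coeff_sum, Finset.sum_eq_single e]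
  · simp [coeff_monomial]
  · intro d _ hne; rw [coeff_monomial, if_neg hne]
  · intro he
    simp [coeff_monomial, MvPolynomial.notMem_support_iff.mp he]

lemma sigma_comp_phi (q : ℕ) (ζ : ℂ) (hζq : ζ ^ q = 1) (hζ0 : ζ ≠ 0) :
    (σζ ζ).comp (φq q) = φq q := by
  apply MvPolynomial.algHom_ext
  intro i
  fin_cases i
  · simp [σζ, φq, mul_pow, ← C_pow, hζq]
  · simp [σζ, φq, mul_pow, ← C_pow, hζq, inv_pow]
  · show σζ ζ (φq q (X 2)) = φq q (X 2)
    have h2 : φq q (X 2) = X 0 * X 1 := by simp [φq]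
    rw [h2, map_mul]
    have h3 : σζ ζ (X 0) = C ζ * X 0 := by simp [σζ]
    have h4 : σζ ζ (X 1) = C ζ⁻¹ * X 1 := by simp [σζ]
    rw [h3, h4, mul_mul_mul_comm, ← map_mul, mul_inv_cancel₀ hζ0, map_one, one_mul]

lemma monomial_mem_range (q : ℕ) (hq : 1 ≤ q) (ζ : ℂ) (hζ : IsPrimitiveRoot ζ q)
    (e : Fin 2 →₀ ℕ) (r : ℂ) (h : ζ ^ e 0 = ζ ^ e 1) :
    (monomial e r : Bp) ∈ (φq q).range := by
  have hζ0 : ζ ≠ 0 := hζ.ne_zero (by omega)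
  rcases le_total (e 1) (e 0) with hle | hle
  · have h1 : ζ ^ (e 0 - e 1) = 1 := by
      have : ζ ^ (e 0 - e 1) * ζ ^ e 1 = ζ ^ e 1 := by
        rw [← pow_add]
        rw [Nat.sub_add_cancel hle, h]
      exact mul_right_cancel₀ (pow_ne_zero _ hζ0) (this.trans (one_mul _).symm)
    obtain ⟨k, hk⟩ := (hζ.pow_eq_one_iff_dvd _).mp h1
    have he0 : e 0 = q * k + e 1 := by omega
    refine ⟨monomial (Finsupp.single 0 k + Finsupp.single 2 (e 1)) r, ?_⟩
    show φq q _ = _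
    rw [phi_monomial]
    congr 1
    rw [fin2_decomp e, Edeg]
    congr 1 <;> simp [Finsupp.single_apply, he0]
  · have h1 : ζ ^ (e 1 - e 0) = 1 := by
      have : ζ ^ (e 1 - e 0) * ζ ^ e 0 = ζ ^ e 0 := by
        rw [← pow_add]
        rw [Nat.sub_add_cancel hle, h]
      exact mul_right_cancel₀ (pow_ne_zero _ hζ0) (this.trans (one_mul _).symm)
    obtain ⟨k, hk⟩ := (hζ.pow_eq_one_iff_dvd _).mp h1
    have he1 : e 1 = q * k + e 0 := by omega
    refine ⟨monomial (Finsupp.single 1 k + Finsupp.single 2 (e 0)) r, ?_⟩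
    show φq q _ = _
    rw [phi_monomial]
    congr 1
    rw [fin2_decomp e, Edeg]
    congr 1 <;> simp [Finsupp.single_apply, he1]

lemma mem_range_of_fixed (q : ℕ) (hq : 1 ≤ q) (ζ : ℂ) (hζ : IsPrimitiveRoot ζ q)
    (f : Bp) (hf : σζ ζ f = f) : f ∈ (φq q).range := by
  have hζ0 : ζ ≠ 0 := hζ.ne_zero (by omega)
  have hmod : ∀ e ∈ f.support, ζ ^ (e 0) = ζ ^ (e 1) := by
    intro e he
    have h1 : coeff e (σζ ζ f) = coeff e f := by rw [hf]
    rw [coeff_sigma] at h1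
    have hc : coeff e f ≠ 0 := mem_support_iff.mp he
    have h2 : ζ ^ e 0 * ζ⁻¹ ^ e 1 = 1 :=
      mul_right_cancel₀ hc (h1.trans (one_mul _).symm)
    rw [inv_pow] at h2
    exact (mul_inv_eq_one₀ (pow_ne_zero _ hζ0)).mp h2
  rw [← support_sum_monomial_coeff f]
  exact Subalgebra.sum_mem _ fun e he => monomial_mem_range q hq ζ hζ e _ (hmod e he)

theorem Aq_aux (q : ℕ) (hq : 1 ≤ q) :
    IsDomain (Ap ⧸ Iq q) ∧ IsIntegrallyClosed (Ap ⧸ Iq q) := by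
  haveI hprime : (Iq q).IsPrime := by
    rw [← ker_eq_span q hq]; exact RingHom.ker_isPrime _
  haveI hdom : IsDomain (Ap ⧸ Iq q) := Ideal.Quotient.isDomain _
  refine ⟨hdom, ?_⟩
  set A := Ap ⧸ Iq q with hA
  set ψ : A →+* Bp :=
    Ideal.Quotient.lift (Iq q) (φq q).toRingHom (fun a ha => span_le_ker q ha) with hψdef
  have hψinj : Function.Injective ψ :=
    RingHom.lift_injective_of_ker_le_ideal _ _ (le_of_eq (ker_eq_span q hq))
  have hψmk : ∀ G : Ap, ψ (Ideal.Quotient.mk _ G) = φq q G := fun G => rfl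
  set ζ : ℂ := Complex.exp (2 * Real.pi * Complex.I / q) with hζdef
  have hζ : IsPrimitiveRoot ζ q := Complex.isPrimitiveRoot_exp q (by omega)
  have hζ0 : ζ ≠ 0 := hζ.ne_zero (by omega)
  have hσψ : ∀ a : A, σζ ζ (ψ a) = ψ a := by
    intro a
    obtain ⟨G, rfl⟩ := Ideal.Quotient.mk_surjective a
    rw [hψmk]
    calc σζ ζ (φq q G) = ((σζ ζ).comp (φq q)) G := rfl
      _ = φq q G := by rw [sigma_comp_phi q ζ hζ.pow_eq_one hζ0]
  letI : Algebra A Bp := ψ.toAlgebra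
  have hAM : ∀ a : A, algebraMap A (FractionRing Bp) a
      = algebraMap Bp (FractionRing Bp) (ψ a) := fun a =>
    IsScalarTower.algebraMap_apply A Bp (FractionRing Bp) a
  rw [isIntegrallyClosed_iff (FractionRing A)]
  intro x hx
  have hginj : Function.Injective (algebraMap A (FractionRing Bp)) := by
    intro a b h
    rw [hAM, hAM] at h
    exact hψinj (IsFractionRing.injective Bp (FractionRing Bp) h)
  set ι : FractionRing A →+* FractionRing Bp := IsFractionRing.lift hginj with hιdef
  have hιinj : Function.Injective ι := ι.injective
  have hιalg : ∀ a : A, ι (algebraMap A (FractionRing A) a) = algebraMap A (FractionRing Bp) a :=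
    fun a => IsFractionRing.lift_algebraMap hginj a
  have hιint : IsIntegral Bp (ι x) := by
    have h1 : IsIntegral A (ι x) := by
      have hιa : IsIntegral A ((⟨ι, hιalg⟩ : FractionRing A →ₐ[A] FractionRing Bp) x) :=
        hx.map _
      exact hιa
    exact h1.tower_top
  obtain ⟨b, hb⟩ := IsIntegrallyClosed.isIntegral_iff.mp hιint
  obtain ⟨⟨r, s⟩, hmk⟩ := IsLocalization.mk'_surjective (nonZeroDivisors A) x
  have hspec : x * algebraMap A (FractionRing A) (s : A) = algebraMap A (FractionRing A) r := by
    rw [← hmk]; exact IsLocalization.mk'_spec _ r s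
  have hbs : b * ψ (s : A) = ψ r := by
    apply IsFractionRing.injective Bp (FractionRing Bp)
    have := congrArg ι hspec
    rw [map_mul, hιalg, hιalg] at this
    rw [map_mul]
    calc algebraMap Bp (FractionRing Bp) b * algebraMap Bp (FractionRing Bp) (ψ s)
        = ι x * algebraMap A (FractionRing Bp) (s : A) := by rw [hb, hAM]
      _ = algebraMap A (FractionRing Bp) r := this
      _ = algebraMap Bp (FractionRing Bp) (ψ r) := hAM r
  have hsne : ψ (s : A) ≠ 0 := by
    intro h
    exact nonZeroDivisors.ne_zero s.2 (hψinj (h.trans (map_zero ψ).symm))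
  have hσb : σζ ζ b = b := by
    have h1 : σζ ζ b * ψ (s : A) = b * ψ (s : A) := by
      calc σζ ζ b * ψ (s : A) = σζ ζ b * σζ ζ (ψ s) := by rw [hσψ]
        _ = σζ ζ (b * ψ s) := (map_mul _ _ _).symm
        _ = σζ ζ (ψ r) := by rw [hbs]
        _ = ψ r := hσψ r
        _ = b * ψ (s : A) := hbs.symm
    exact mul_right_cancel₀ hsne h1
  obtain ⟨G, hG⟩ := mem_range_of_fixed q hq ζ hζ b hσb
  refine ⟨Ideal.Quotient.mk _ G, hιinj ?_⟩
  rw [hιalg]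
  calc algebraMap A (FractionRing Bp) (Ideal.Quotient.mk _ G)
      = algebraMap Bp (FractionRing Bp) (ψ (Ideal.Quotient.mk _ G)) := hAM _
    _ = algebraMap Bp (FractionRing Bp) b := by rw [hψmk]; exact congrArg _ hG
    _ = ι x := hb

/-- For every `q ≥ 1` the ring `ℂ[X,Y,Z]/(X·Y - Z^q)` of the `A_{q-1}` hypersurface
singularity is an integral domain and is integrally closed in its field of fractions. -/
theorem Aq_singularity_normal (q : ℕ) (hq : 1 ≤ q) :
    IsDomain (MvPolynomial (Fin 3) ℂ ⧸
        Ideal.span {(X 0 * X 1 - X 2 ^ q : MvPolynomial (Fin 3) ℂ)}) ∧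
      IsIntegrallyClosed (MvPolynomial (Fin 3) ℂ ⧸
        Ideal.span {(X 0 * X 1 - X 2 ^ q : MvPolynomial (Fin 3) ℂ)}) := by
  exact Aq_aux q hq
end
end

section
/- For coprime integers a, b ≥ 1, the polynomial (1 − X^a)(1 − X^b) divides (1 − X)(1 − X^{ab}) in ℤ[X], and the quotient polynomial Δ(X) = (1 − X)(1 − X^{ab}) / ((1 − X^a)(1 − X^b)) satisfies Δ(1) = 1. (Δ is the Alexander polynomial of the (a, b) torus knot, normalized by Δ(1) = 1.) -/
/-!
Write `[n] = 1 + X + ⋯ + X^(n-1)`, so that `1 - X^n = (1 - X) [n]`. The claim reduces to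
`[a] [b] ∣ [ab]`: factor each `[n]` as the product of the cyclotomic polynomials `Φ_d` over the
divisors `d ≠ 1` of `n`; for coprime `a, b` the sets of divisors `≠ 1` of `a` and of `b` are
disjoint and both lie among those of `ab`. Cancelling `(1 - X)^2` and evaluating at `1` turns
`Δ [a] [b] = [ab]` into `Δ(1) a b = a b`.
-/

open Polynomial Finset

variable {R : Type*} [CommRing R] {a b : ℕ}

lemma one_sub_X_pow_eq_mul_geom_sum (n : ℕ) :
    (1 - X ^ n : R[X]) = (1 - X) * ∑ i ∈ range n, X ^ i :=
  (mul_neg_geom_sum X n).symm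

lemma geom_sum_X_mul_geom_sum_X_dvd (ha : 0 < a) (hb : 0 < b) (hab : a.Coprime b) :
    (∑ i ∈ range a, X ^ i) * (∑ i ∈ range b, X ^ i : R[X]) ∣
      ∑ i ∈ range (a * b), X ^ i := by
  have hdisj : Disjoint (a.divisors.erase 1) (b.divisors.erase 1) := by
    refine disjoint_left.2 fun d hda hdb => (mem_erase.1 hda).1 ?_
    exact Nat.eq_one_of_dvd_coprimes hab (Nat.dvd_of_mem_divisors (mem_of_mem_erase hda))
      (Nat.dvd_of_mem_divisors (mem_of_mem_erase hdb))
  have hsub : a.divisors.erase 1 ∪ b.divisors.erase 1 ⊆ (a * b).divisors.erase 1 := by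
    refine union_subset (erase_subset_erase 1 ?_) (erase_subset_erase 1 ?_)
    · exact Nat.divisors_subset_of_dvd (by positivity) (dvd_mul_right a b)
    · exact Nat.divisors_subset_of_dvd (by positivity) (dvd_mul_left b a)
  rw [← prod_cyclotomic_eq_geom_sum ha, ← prod_cyclotomic_eq_geom_sum hb,
    ← prod_cyclotomic_eq_geom_sum (by positivity), ← prod_union hdisj]
  exact prod_dvd_prod_of_subset _ _ _ hsub

lemma one_sub_X_pow_mul_one_sub_X_pow_dvd (ha : 0 < a) (hb : 0 < b) (hab : a.Coprime b) :
    ((1 - X ^ a) * (1 - X ^ b) : R[X]) ∣ (1 - X) * (1 - X ^ (a * b)) := by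
  simp only [one_sub_X_pow_eq_mul_geom_sum]
  calc (1 - X) * (∑ i ∈ range a, X ^ i) * ((1 - X) * ∑ i ∈ range b, X ^ i)
      = (1 - X) * ((1 - X) * ((∑ i ∈ range a, X ^ i) * ∑ i ∈ range b, (X : R[X]) ^ i)) := by
        ring
    _ ∣ (1 - X) * ((1 - X) * ∑ i ∈ range (a * b), X ^ i) :=
      mul_dvd_mul_left _ (mul_dvd_mul_left _ (geom_sum_X_mul_geom_sum_X_dvd ha hb hab))

lemma eval_one_eq_one_of_mul_one_sub_X_pow [IsDomain R] [CharZero R] (ha : 0 < a) (hb : 0 < b)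
    {Δ : R[X]} (hΔ : Δ * ((1 - X ^ a) * (1 - X ^ b)) = (1 - X) * (1 - X ^ (a * b))) :
    Δ.eval 1 = 1 := by
  have h1X : (1 - X : R[X]) ≠ 0 := fun h => by simpa using congrArg (eval 0) h
  have hgeom :
      Δ * ((∑ i ∈ range a, X ^ i) * ∑ i ∈ range b, X ^ i) = ∑ i ∈ range (a * b), X ^ i := by
    refine mul_left_cancel₀ (mul_ne_zero h1X h1X) ?_
    simp only [one_sub_X_pow_eq_mul_geom_sum] at hΔ
    linear_combination hΔ
  have hab : (a * b : R) ≠ 0 := by exact_mod_cast (Nat.mul_pos ha hb).ne'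
  have heval := congrArg (eval 1) hgeom
  simp only [eval_mul, eval_finsetSum, eval_pow, eval_X, one_pow, sum_const, card_range,
    nsmul_eq_mul, mul_one, Nat.cast_mul] at heval
  exact mul_left_cancel₀ hab (by linear_combination heval)

/-- For coprime `a, b ≥ 1`, `(1 - X^a)(1 - X^b)` divides `(1 - X)(1 - X^(ab))` in `ℤ[X]`,
and the quotient polynomial `Δ` (the Alexander polynomial of the `(a,b)` torus knot)
satisfies `Δ(1) = 1`. -/
theorem torusKnot_alexander (a b : ℕ) (ha : 1 ≤ a) (hb : 1 ≤ b) (hab : Nat.Coprime a b) :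
    ((1 - X ^ a) * (1 - X ^ b) : ℤ[X]) ∣ (1 - X) * (1 - X ^ (a * b)) ∧
      ∀ Δ : ℤ[X],
        Δ * ((1 - X ^ a) * (1 - X ^ b)) = (1 - X) * (1 - X ^ (a * b)) → Δ.eval 1 = 1 :=
  ⟨one_sub_X_pow_mul_one_sub_X_pow_dvd ha hb hab,
    fun _ hΔ => eval_one_eq_one_of_mul_one_sub_X_pow ha hb hΔ⟩
end
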